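/- arXiv:1305.7255 — 2 statements merged into one kernel-verified Lean document; each statement's English description precedes it below -/
import Mathlib

section
/- Let d ≤ s be positive integers, let J be a real s×d matrix of rank d, and let G be a real symmetric positive-definite d×d matrix. Set H̃ = J G⁻¹ Jᵀ and H = (J†)ᵀ G J† with J† = (JᵀJ)⁻¹Jᵀ. Then H is the Moore–Penrose pseudoinverse of H̃: H̃ H H̃ = H̃, H H̃ H = H, (H̃ H)ᵀ = H̃ H, and (H H̃)ᵀ = H H̃. -/
open Matrix

/-- The Moore–Penrose pseudoinverse `J† = (JᵀJ)⁻¹Jᵀ` of a full-column-rank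
matrix `J`. -/
noncomputable def pinv {s d : ℕ} (J : Matrix (Fin s) (Fin d) ℝ) :
    Matrix (Fin d) (Fin s) ℝ :=
  (Jᵀ * J)⁻¹ * Jᵀ

/-- The embedding (pushforward) metric `H = (J†)ᵀ G J†`. -/
noncomputable def embMetric {s d : ℕ} (J : Matrix (Fin s) (Fin d) ℝ)
    (G : Matrix (Fin d) (Fin d) ℝ) : Matrix (Fin s) (Fin s) ℝ :=
  (pinv J)ᵀ * G * pinv J

/-- The dual embedding metric `H̃ = J G⁻¹ Jᵀ`. -/
noncomputable def dualEmbMetric {s d : ℕ} (J : Matrix (Fin s) (Fin d) ℝ)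
    (G : Matrix (Fin d) (Fin d) ℝ) : Matrix (Fin s) (Fin s) ℝ :=
  J * G⁻¹ * Jᵀ

/-! Both products `H̃ H` and `H H̃` collapse to the orthogonal projection `J J†` onto the column
space of `J`, using only that `J†` is a left inverse of `J` and that `J J†` is symmetric. The
Penrose conditions then follow from `J J† J = J`. -/

namespace Matrix

variable {m n R : Type*}

def IsMoorePenroseInverse [Fintype m] [Fintype n] [CommRing R]
    (A : Matrix m n R) (P : Matrix n m R) : Prop :=
  A * P * A = A ∧ P * A * P = P ∧ (A * P)ᵀ = A * P ∧ (P * A)ᵀ = P * A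

theorem isUnit_of_rank_eq_card [Fintype n] [DecidableEq n] [Field R] (A : Matrix n n R)
    (hA : A.rank = Fintype.card n) : IsUnit A := by
  rw [← mulVec_injective_iff_isUnit]
  have hsurj : Function.Surjective A.mulVecLin := by
    rw [← LinearMap.range_eq_top]
    apply Submodule.eq_top_of_finrank_eq
    simpa [rank] using hA
  exact LinearMap.injective_iff_surjective.2 hsurj

theorem isUnit_transpose_mul_self_of_rank_eq_card [Fintype m] [Fintype n] [DecidableEq n]
    [Field R] [LinearOrder R] [IsStrictOrderedRing R] (J : Matrix m n R)
    (hJ : J.rank = Fintype.card n) : IsUnit (Jᵀ * J) :=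
  isUnit_of_rank_eq_card _ (by rw [rank_transpose_mul_self, hJ])

theorem isMoorePenroseInverse_conj [Fintype m] [Fintype n] [DecidableEq n] [CommRing R]
    {J : Matrix m n R} {L : Matrix n m R} (hLJ : L * J = 1) (hJL : (J * L)ᵀ = J * L)
    {G : Matrix n n R} (hG : IsUnit G.det) :
    IsMoorePenroseInverse (J * G⁻¹ * Jᵀ) (Lᵀ * G * L) := by
  have hJLt : Jᵀ * Lᵀ = 1 := by rw [← transpose_mul, hLJ, transpose_one]
  have hAP : J * G⁻¹ * Jᵀ * (Lᵀ * G * L) = J * L := by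
    simp only [Matrix.mul_assoc]
    rw [← Matrix.mul_assoc Jᵀ, hJLt, Matrix.one_mul, nonsing_inv_mul_cancel_left _ _ hG]
  have hPA : Lᵀ * G * L * (J * G⁻¹ * Jᵀ) = J * L := by
    simp only [Matrix.mul_assoc]
    rw [← Matrix.mul_assoc L, hLJ, Matrix.one_mul, mul_nonsing_inv_cancel_left _ _ hG,
      ← transpose_mul, hJL]
  refine ⟨?_, ?_, by rw [hAP, hJL], by rw [hPA, hJL]⟩
  · rw [hAP]
    simp only [← Matrix.mul_assoc]
    rw [Matrix.mul_assoc J L J, hLJ, Matrix.mul_one]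
  · rw [Matrix.mul_assoc, hAP]
    simp only [Matrix.mul_assoc]
    rw [← Matrix.mul_assoc L J L, hLJ, Matrix.one_mul]

end Matrix

theorem pinv_mul_self {s d : ℕ} {J : Matrix (Fin s) (Fin d) ℝ} (hJ : IsUnit (Jᵀ * J)) :
    pinv J * J = 1 := by
  rw [pinv, Matrix.mul_assoc, nonsing_inv_mul _ ((isUnit_iff_isUnit_det _).mp hJ)]

theorem transpose_mul_pinv {s d : ℕ} (J : Matrix (Fin s) (Fin d) ℝ) :
    (J * pinv J)ᵀ = J * pinv J := by
  rw [pinv, transpose_mul, transpose_mul, transpose_transpose, transpose_nonsing_inv,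
    transpose_mul, transpose_transpose, Matrix.mul_assoc]

theorem embMetric_is_pseudoinverse_of_dual_general {d s : ℕ}
    (J : Matrix (Fin s) (Fin d) ℝ) (hJ : J.rank = d)
    (G : Matrix (Fin d) (Fin d) ℝ) (hG : G.PosDef) :
    dualEmbMetric J G * embMetric J G * dualEmbMetric J G = dualEmbMetric J G ∧
    embMetric J G * dualEmbMetric J G * embMetric J G = embMetric J G ∧
    (dualEmbMetric J G * embMetric J G)ᵀ = dualEmbMetric J G * embMetric J G ∧
    (embMetric J G * dualEmbMetric J G)ᵀ = embMetric J G * dualEmbMetric J G := by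
  have hJJ : IsUnit (Jᵀ * J) :=
    isUnit_transpose_mul_self_of_rank_eq_card J (by rw [hJ, Fintype.card_fin])
  have hGdet : IsUnit G.det := (isUnit_iff_isUnit_det G).mp hG.isUnit
  exact isMoorePenroseInverse_conj (pinv_mul_self hJJ) (transpose_mul_pinv J) hGdet

/-- `H = (J†)ᵀ G J†` is the Moore–Penrose pseudoinverse of `H̃ = J G⁻¹ Jᵀ`:
the four Penrose conditions hold. -/
theorem embMetric_is_pseudoinverse_of_dual {d s : ℕ} (hd : 0 < d) (hds : d ≤ s)
    (J : Matrix (Fin s) (Fin d) ℝ) (hJ : J.rank = d)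
    (G : Matrix (Fin d) (Fin d) ℝ) (hG : G.PosDef) :
    dualEmbMetric J G * embMetric J G * dualEmbMetric J G = dualEmbMetric J G ∧
    embMetric J G * dualEmbMetric J G * embMetric J G = embMetric J G ∧
    (dualEmbMetric J G * embMetric J G)ᵀ = dualEmbMetric J G * embMetric J G ∧
    (embMetric J G * dualEmbMetric J G)ᵀ = embMetric J G * dualEmbMetric J G :=
  embMetric_is_pseudoinverse_of_dual_general J hJ G hG
end

section
/- Let W be a real n×n matrix with nonnegative entries such that every row sum is strictly positive, let λ ∈ ℝ, c, ε > 0, and let L = (cε)⁻¹ (D̃⁻¹ W̃ − I_n) be the associated graph Laplacian, where D = diag(W𝟙), W̃ = D^{-λ} W D^{-λ}, and D̃ = diag(W̃𝟙). For any vectors f^1, …, f^s ∈ ℝ^n and any index p ∈ {1,…,n}, the s×s matrix h̃(p) with entries h̃(p)_{ij} = (1/2)[L(f^i ⊙ f^j) − f^i ⊙ (L f^j) − f^j ⊙ (L f^i)]_p is symmetric positive semidefinite. -/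
/-!
At a point `p`, the renormalized Laplacian is `L = κ (P - I)` with `κ = (cε)⁻¹ > 0` and `P = D̃⁻¹W̃`
a matrix whose `p`-th row is a probability vector. For such an `L` the carré du champ is a
weighted sum of rank-one terms,
`½ [L(fg) - f Lg - g Lf]_p = (κ/2) ∑_k P_pk (f_k - f_p)(g_k - g_p)`,
so `h̃(p)` is the Gram matrix of the vectors `k ↦ f^i_k - f^i_p` for nonnegative weights.
-/

open Matrix

namespace Matrix

variable {ι : Type*} [Fintype ι]

theorem posSemidef_of_sum_mul_mul {s : Type*} [Fintype s] {w : ι → ℝ} (hw : 0 ≤ w)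
    (v : s → ι → ℝ) : (of fun i j => ∑ k, w k * v i k * v j k).PosSemidef := by
  classical
  convert (PosSemidef.diagonal hw).conjTranspose_mul_mul_same (of fun k i => v i k) using 1
  ext i j
  rw [mul_apply]
  simp only [of_apply, mul_diagonal, conjTranspose_apply, star_trivial]
  exact Finset.sum_congr rfl fun k _ => by ring

theorem sum_mul_sub_mul_sub {R : Type*} [CommRing R] {P : Matrix ι ι R} {p : ι}
    (hP : ∑ k, P p k = 1) (f g : ι → R) :
    ∑ k, P p k * (f k - f p) * (g k - g p)
      = (P *ᵥ (f * g)) p - f p * (P *ᵥ g) p - g p * (P *ᵥ f) p + f p * g p := by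
  have hfg : f p * g p = f p * g p * ∑ k, P p k := by rw [hP, mul_one]
  rw [hfg]
  simp only [mulVec, dotProduct, Finset.mul_sum, ← Finset.sum_sub_distrib,
    ← Finset.sum_add_distrib, Pi.mul_apply]
  exact Finset.sum_congr rfl fun k _ => by ring

theorem smul_sub_one_mulVec_mul {R : Type*} [CommRing R] [DecidableEq ι] {P : Matrix ι ι R}
    {p : ι} (hP : ∑ k, P p k = 1) (κ : R) (f g : ι → R) :
    ((κ • (P - 1)) *ᵥ (f * g)) p - f p * ((κ • (P - 1)) *ᵥ g) p
        - g p * ((κ • (P - 1)) *ᵥ f) p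
      = κ * ∑ k, P p k * (f k - f p) * (g k - g p) := by
  simp only [sum_mul_sub_mul_sub hP, smul_mulVec, sub_mulVec, one_mulVec, Pi.smul_apply,
    Pi.sub_apply, Pi.mul_apply, smul_eq_mul]
  ring

theorem posSemidef_carreDuChamp {s : Type*} [Fintype s] [DecidableEq ι] {P : Matrix ι ι ℝ}
    {p : ι} (hP₀ : ∀ k, 0 ≤ P p k) (hP₁ : ∑ k, P p k = 1) {κ : ℝ} (hκ : 0 ≤ κ)
    (f : s → ι → ℝ) :
    (of fun i j : s => (1 / 2 : ℝ) *
      (((κ • (P - 1)) *ᵥ (f i * f j)) p - f i p * ((κ • (P - 1)) *ᵥ f j) p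
        - f j p * ((κ • (P - 1)) *ᵥ f i) p)).PosSemidef := by
  convert posSemidef_of_sum_mul_mul (w := fun k => κ / 2 * P p k)
    (fun k => mul_nonneg (by positivity) (hP₀ k)) (fun i k => f i k - f i p) using 1
  ext i j
  rw [of_apply, of_apply, smul_sub_one_mulVec_mul hP₁, Finset.mul_sum, Finset.mul_sum]
  exact Finset.sum_congr rfl fun k _ => by ring

section RowNormalization

variable {K : Type*} [Field K] [DecidableEq ι] {A : Matrix ι ι K}

theorem inv_diagonal_rowSum_mul_apply (hA : ∀ i, ∑ j, A i j ≠ 0) (i j : ι) :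
    ((diagonal fun i => ∑ j, A i j)⁻¹ * A) i j = (∑ k, A i k)⁻¹ * A i j := by
  have hinv : (diagonal fun i => ∑ j, A i j)⁻¹ = diagonal fun i => (∑ j, A i j)⁻¹ := by
    refine inv_eq_left_inv ?_
    rw [diagonal_mul_diagonal, ← diagonal_one]
    exact congrArg diagonal (funext fun i => inv_mul_cancel₀ (hA i))
  rw [hinv, diagonal_mul]

theorem sum_inv_diagonal_rowSum_mul_apply (hA : ∀ i, ∑ j, A i j ≠ 0) (i : ι) :
    ∑ j, ((diagonal fun i => ∑ j, A i j)⁻¹ * A) i j = 1 := by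
  simp only [inv_diagonal_rowSum_mul_apply hA, ← Finset.mul_sum, inv_mul_cancel₀ (hA i)]

end RowNormalization

theorem sum_diagonal_mul_mul_diagonal_pos [DecidableEq ι] {d e : ι → ℝ} (hd : ∀ i, 0 < d i)
    (he : ∀ i, 0 < e i) {A : Matrix ι ι ℝ} (hA : ∀ i j, 0 ≤ A i j) {i : ι}
    (hi : 0 < ∑ j, A i j) : 0 < ∑ j, (diagonal d * A * diagonal e) i j := by
  obtain ⟨j, -, hj⟩ :=
    Finset.exists_lt_of_sum_lt (f := fun _ => 0) (g := A i) (by simpa using hi)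
  simp only [mul_diagonal, diagonal_mul]
  exact Finset.sum_pos' (fun k _ => mul_nonneg (mul_nonneg (hd i).le (hA i k)) (he k).le)
    ⟨j, Finset.mem_univ j, mul_pos (mul_pos (hd i) hj) (he j)⟩

end Matrix

/-- The discrete dual embedding metric estimate computed in Step 4 of the
LearnMetric algorithm is symmetric positive semidefinite: with the
renormalized graph Laplacian `L = (cε)⁻¹(D̃⁻¹W̃ − I)` built from a nonnegative
weight matrix `W` with positive row sums, for any embedding coordinate vectors
`f^1, …, f^s` and any point `p`, the `s×s` matrix with entries
`h̃(p)_{ij} = (1/2)[L(f^i ⊙ f^j) − f^i ⊙ (Lf^j) − f^j ⊙ (Lf^i)]_p`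
is positive semidefinite. -/
theorem learnMetric_dual_estimate_posSemidef {n s : ℕ}
    (W : Matrix (Fin n) (Fin n) ℝ)
    (hW : ∀ i j, 0 ≤ W i j)
    (hrow : ∀ i, 0 < ∑ j, W i j)
    (lam : ℝ) (c ε : ℝ) (hc : 0 < c) (hε : 0 < ε)
    (f : Fin s → (Fin n → ℝ)) (p : Fin n) :
    let D : Matrix (Fin n) (Fin n) ℝ :=
      Matrix.diagonal fun i => (∑ j, W i j) ^ (-lam)
    let Wt : Matrix (Fin n) (Fin n) ℝ := D * W * D
    let Dt : Matrix (Fin n) (Fin n) ℝ :=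
      Matrix.diagonal fun i => ∑ j, Wt i j
    let L : Matrix (Fin n) (Fin n) ℝ := (c * ε)⁻¹ • (Dt⁻¹ * Wt - 1)
    (Matrix.of fun i j : Fin s =>
        (1 / 2 : ℝ) *
          ((L *ᵥ (f i * f j)) p - f i p * (L *ᵥ f j) p
            - f j p * (L *ᵥ f i) p)).PosSemidef := by
  intro D Wt Dt L
  have hd : ∀ i, 0 < (∑ j, W i j) ^ (-lam) := fun i => Real.rpow_pos_of_pos (hrow i) _
  have hWt : ∀ i j, 0 ≤ Wt i j := fun i j => by
    simp only [Wt, D, mul_diagonal, diagonal_mul]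
    exact mul_nonneg (mul_nonneg (hd i).le (hW i j)) (hd j).le
  have hWt_row : ∀ i, ∑ j, Wt i j ≠ 0 := fun i =>
    (sum_diagonal_mul_mul_diagonal_pos hd hd hW (hrow i)).ne'
  refine posSemidef_carreDuChamp (fun k => ?_) (sum_inv_diagonal_rowSum_mul_apply hWt_row p)
    (by positivity) f
  rw [inv_diagonal_rowSum_mul_apply hWt_row]
  exact mul_nonneg (inv_nonneg.2 (Finset.sum_nonneg fun j _ => hWt p j)) (hWt p k)
end
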